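/- arXiv:2210.06845 — 2 statements merged into one kernel-verified Lean document; each statement's English description precedes it below -/
import Mathlib

section
/- Let H₁ and W be finite simple graphs such that the product H := H₁ × W is a connected non-bipartite core and is H₁-projective. Then for all distinct vertices a, b, c ∈ V(H₁), every w ∈ V(W) and every integer t ≥ 1, there exists a t-or-gadget (F,h',R) with domain ((a,b,c),w). -/
/-- The direct (tensor) product of two simple graphs. -/
def tensorProd {V₁ V₂ : Type} (H₁ : SimpleGraph V₁) (H₂ : SimpleGraph V₂) :
    SimpleGraph (V₁ × V₂) where
  Adj x y := H₁.Adj x.1 y.1 ∧ H₂.Adj x.2 y.2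
  symm := ⟨fun _ _ h => ⟨h.1.symm, h.2.symm⟩⟩
  loopless := ⟨fun _ h => H₁.loopless.irrefl _ h.1⟩

/-- The direct product of `ℓ` copies of `H₁` and one copy of `W`. -/
def powProd {V₁ VW : Type} (H₁ : SimpleGraph V₁) (W : SimpleGraph VW) (ℓ : ℕ) :
    SimpleGraph ((Fin ℓ → V₁) × VW) where
  Adj x y := (∀ i, H₁.Adj (x.1 i) (y.1 i)) ∧ W.Adj x.2 y.2
  symm := ⟨fun _ _ h => ⟨fun i => (h.1 i).symm, h.2.symm⟩⟩
  loopless := ⟨fun _ h => W.loopless.irrefl _ h.2⟩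

/-- `H₁ × W` is `H₁`-projective: for every `ℓ ≥ 1`, every `H₁`-idempotent
homomorphism `f : H₁^ℓ × W → H₁` is a projection onto one of the `H₁`-coordinates. -/
def H1Projective {V₁ VW : Type} (H₁ : SimpleGraph V₁) (W : SimpleGraph VW) : Prop :=
  ∀ ℓ : ℕ, 1 ≤ ℓ → ∀ f : powProd H₁ W ℓ →g H₁,
    (∀ (x : V₁) (y : VW), f (fun _ => x, y) = x) →
    ∃ i : Fin ℓ, ∀ z : (Fin ℓ → V₁) × VW, f z = z.1 i

/-! `F = H₁^t × W`, with its diagonal pinned to the identity, is the gadget. By projectivity the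
first coordinate of every pinned homomorphism `F → H₁ × W` is a coordinate projection, so on the
vertices `R` whose `H₁`-part is `a` at one position and `b` at all others it takes the value `a`
exactly once and `b` elsewhere; the projections themselves realise each `v ∈ R` as the
`a`-vertex. -/

namespace powProd

variable {V₁ VW : Type}

def diag (ℓ : ℕ) (p : V₁ × VW) : (Fin ℓ → V₁) × VW := (fun _ => p.1, p.2)

theorem diag_injective {ℓ : ℕ} (hℓ : 1 ≤ ℓ) :
    Function.Injective (diag ℓ : V₁ × VW → (Fin ℓ → V₁) × VW) := by
  rintro ⟨x, y⟩ ⟨x', y'⟩ h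
  simp only [diag, Prod.mk.injEq] at h
  exact Prod.ext (congrFun h.1 ⟨0, hℓ⟩) h.2

def eval (H₁ : SimpleGraph V₁) (W : SimpleGraph VW) {ℓ : ℕ} (i : Fin ℓ) :
    powProd H₁ W ℓ →g tensorProd H₁ W where
  toFun z := (z.1 i, z.2)
  map_rel' h := ⟨h.1 i, h.2⟩

@[simp]
theorem eval_apply (H₁ : SimpleGraph V₁) (W : SimpleGraph VW) {ℓ : ℕ} (i : Fin ℓ)
    (z : (Fin ℓ → V₁) × VW) : eval H₁ W i z = (z.1 i, z.2) := rfl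

end powProd

theorem H1Projective.exists_fst_eq_apply {V₁ VW : Type} {H₁ : SimpleGraph V₁}
    {W : SimpleGraph VW} (hproj : H1Projective H₁ W) {ℓ : ℕ} (hℓ : 1 ≤ ℓ)
    (h : powProd H₁ W ℓ →g tensorProd H₁ W) (hdiag : ∀ p, h (powProd.diag ℓ p) = p) :
    ∃ i : Fin ℓ, ∀ z, (h z).1 = z.1 i :=
  hproj ℓ hℓ ⟨fun z => (h z).1, fun hz => (h.map_rel hz).1⟩
    fun x y => congrArg Prod.fst (hdiag (x, y))

theorem Function.update_const_injective {α β : Type*} [DecidableEq α] {a b : β} (hab : a ≠ b) :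
    Function.Injective fun j : α => Function.update (fun _ => b) j a := by
  intro j k hjk
  by_contra! hne
  exact hab (by simpa [Function.update_of_ne hne] using congrFun hjk j)

theorem stmt_2_general {V₁ VW : Type} [Fintype V₁] [Fintype VW]
    (H₁ : SimpleGraph V₁) (W : SimpleGraph VW)
    (hproj : H1Projective H₁ W)
    (a b c : V₁) (hab : a ≠ b)
    (w : VW) (t : ℕ) (ht : 1 ≤ t) :
    ∃ (VF : Type) (_ : Fintype VF) (F : SimpleGraph VF) (V' : Set VF)
      (h' : V' → V₁ × VW) (R : Set VF), R.ncard = t ∧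
      (∀ h : F →g tensorProd H₁ W,
        (∀ (v : VF) (hv : v ∈ V'), h v = h' ⟨v, hv⟩) →
        (∀ u ∈ R, (h u).1 ∈ ({a, b, c} : Set V₁)) ∧ (∃ v ∈ R, (h v).1 = a)) ∧
      (∀ v ∈ R, ∃ h : F →g tensorProd H₁ W,
        (∀ (x : VF) (hx : x ∈ V'), h x = h' ⟨x, hx⟩) ∧
        h v = (a, w) ∧
        ∀ u ∈ R, u ≠ v → h u ∈ ({(b, w), (c, w)} : Set (V₁ × VW))) := by
  classical
  let r : Fin t → (Fin t → V₁) × VW := fun j => (Function.update (fun _ => b) j a, w)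
  have hr : Function.Injective r := fun j k hjk =>
    Function.update_const_injective hab (congrArg Prod.fst hjk)
  refine ⟨_, inferInstance, powProd H₁ W t, Set.range (powProd.diag t),
    (Equiv.ofInjective _ (powProd.diag_injective ht)).symm, Set.range r,
    by rw [Set.ncard_range_of_injective hr, Nat.card_fin], ?_, ?_⟩
  · intro h hpin
    obtain ⟨i, hi⟩ := hproj.exists_fst_eq_apply ht h fun p => by
      simpa using hpin _ ⟨p, rfl⟩
    refine ⟨?_, r i, ⟨i, rfl⟩, by simp [hi, r]⟩
    rintro _ ⟨j, rfl⟩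
    rcases eq_or_ne i j with rfl | hij
    · simp [hi, r]
    · simp [hi, r, Function.update_of_ne hij]
  · rintro _ ⟨j, rfl⟩
    refine ⟨powProd.eval H₁ W j, ?_, by simp [r], ?_⟩
    · rintro _ ⟨p, rfl⟩
      rw [Equiv.ofInjective_symm_apply]
      rfl
    · rintro _ ⟨k, rfl⟩ hkj
      have hjk : j ≠ k := fun h => hkj (congrArg r h.symm)
      simp [r, Function.update_of_ne hjk]

/-- Existence of `t`-or-gadgets with domain `((a,b,c),w)` when
`H = H₁ × W` is a connected non-bipartite core that is `H₁`-projective. -/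
theorem stmt_2 {V₁ VW : Type} [Fintype V₁] [Fintype VW]
    (H₁ : SimpleGraph V₁) (W : SimpleGraph VW)
    (hconn : (tensorProd H₁ W).Connected)
    (hnonbip : ¬ (tensorProd H₁ W).Colorable 2)
    (hcore : ∀ f : tensorProd H₁ W →g tensorProd H₁ W, Function.Injective f)
    (hproj : H1Projective H₁ W)
    (a b c : V₁) (hab : a ≠ b) (hac : a ≠ c) (hbc : b ≠ c)
    (w : VW) (t : ℕ) (ht : 1 ≤ t) :
    ∃ (VF : Type) (_ : Fintype VF) (F : SimpleGraph VF) (V' : Set VF)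
      (h' : V' → V₁ × VW) (R : Set VF), R.ncard = t ∧
      (∀ h : F →g tensorProd H₁ W,
        (∀ (v : VF) (hv : v ∈ V'), h v = h' ⟨v, hv⟩) →
        (∀ u ∈ R, (h u).1 ∈ ({a, b, c} : Set V₁)) ∧ (∃ v ∈ R, (h v).1 = a)) ∧
      (∀ v ∈ R, ∃ h : F →g tensorProd H₁ W,
        (∀ (x : VF) (hx : x ∈ V'), h x = h' ⟨x, hx⟩) ∧
        h v = (a, w) ∧
        ∀ u ∈ R, u ≠ v → h u ∈ ({(b, w), (c, w)} : Set (V₁ × VW))) :=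
  stmt_2_general H₁ W hproj a b c hab w t ht
end

section
/- Let H₁ and H₂ be simple graphs and let H = H₁ × H₂ be their direct product. Then 𝒮(H) = {S₁ × S₂ : S₁ ∈ 𝒮(H₁), S₂ ∈ 𝒮(H₂)}, i.e., the signature sets of H are exactly the Cartesian products of a signature set of H₁ with a signature set of H₂. -/
/-- The signature set `S(T)` of a set `T` of vertices of `H`: the set of common
neighbors of all vertices of `T`. -/
def sigSet {V : Type} (H : SimpleGraph V) (T : Set V) : Set V :=
  ⋂ t ∈ T, H.neighborSet t

/-- The family `𝒮(H)` of all nonempty signature sets of nonempty vertex sets. -/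
def sigFamily {V : Type} (H : SimpleGraph V) : Set (Set V) :=
  {S | S.Nonempty ∧ ∃ T : Set V, T.Nonempty ∧ sigSet H T = S}

/-- The signature number `s(H)`, i.e. the cardinality of `𝒮(H)`. -/
noncomputable def sigNum {V : Type} (H : SimpleGraph V) : ℕ := (sigFamily H).ncard

/-!
The common neighbourhood of a vertex set `T` of `H₁ × H₂` is the product of the common
neighbourhoods of its projections `T₁ = fst '' T` and `T₂ = snd '' T`. A product of sets is
nonempty exactly when both factors are, and conversely any nonempty `T₁, T₂` are the projections
of `T₁ ×ˢ T₂`.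
-/

section TensorProd

variable {V₁ V₂ : Type} (H₁ : SimpleGraph V₁) (H₂ : SimpleGraph V₂)

theorem tensorProd_adj {x y : V₁ × V₂} :
    (tensorProd H₁ H₂).Adj x y ↔ H₁.Adj x.1 y.1 ∧ H₂.Adj x.2 y.2 :=
  Iff.rfl

theorem sigSet_tensorProd (T : Set (V₁ × V₂)) :
    sigSet (tensorProd H₁ H₂) T = sigSet H₁ (Prod.fst '' T) ×ˢ sigSet H₂ (Prod.snd '' T) := by
  ext ⟨x, y⟩
  simp only [sigSet, Set.mem_iInter, SimpleGraph.mem_neighborSet, tensorProd_adj, Set.mem_prod,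
    Set.forall_mem_image, forall_and]

theorem sigSet_tensorProd_prod {T₁ : Set V₁} {T₂ : Set V₂} (h₁ : T₁.Nonempty)
    (h₂ : T₂.Nonempty) :
    sigSet (tensorProd H₁ H₂) (T₁ ×ˢ T₂) = sigSet H₁ T₁ ×ˢ sigSet H₂ T₂ := by
  rw [sigSet_tensorProd, Set.fst_image_prod _ h₂, Set.snd_image_prod h₁]

end TensorProd

/-- `𝒮(H₁ × H₂) = {S₁ × S₂ : S₁ ∈ 𝒮(H₁), S₂ ∈ 𝒮(H₂)}`. -/
theorem stmt_17 {V₁ V₂ : Type} (H₁ : SimpleGraph V₁) (H₂ : SimpleGraph V₂) :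
    sigFamily (tensorProd H₁ H₂) =
      {S : Set (V₁ × V₂) | ∃ S₁ ∈ sigFamily H₁, ∃ S₂ ∈ sigFamily H₂, S = S₁ ×ˢ S₂} := by
  ext S
  constructor
  · rintro ⟨hS, T, hT, rfl⟩
    rw [sigSet_tensorProd] at hS ⊢
    exact ⟨_, ⟨hS.fst, _, hT.image _, rfl⟩, _, ⟨hS.snd, _, hT.image _, rfl⟩, rfl⟩
  · rintro ⟨_, ⟨hS₁, T₁, hT₁, rfl⟩, _, ⟨hS₂, T₂, hT₂, rfl⟩, rfl⟩
    exact ⟨hS₁.prod hS₂, T₁ ×ˢ T₂, hT₁.prod hT₂, sigSet_tensorProd_prod H₁ H₂ hT₁ hT₂⟩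
end
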